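/- arXiv:cs/0608125 — 3 statements merged into one kernel-verified Lean document; each statement's English description precedes it below -/
import Mathlib

section
/- Equivalently in graph terms: if a finite directed graph with integer edge labels has no cycle of strictly positive total label, then there exists an assignment ω of natural numbers to vertices such that for every edge from α to β with label c, ω(α) + c ≤ ω(β). -/
/-!
Take ω(v) to be the largest cost of a walk along edges of `E` ending at `v`, the empty walk
included, so that ω ≥ 0. Appending an edge α →^c β to a walk ending at α gives
ω(α) + c ≤ ω(β). The supremum is finite: a walk with more than `|V|` edges repeats a source
vertex, and cutting out the closed walk between the two repetitions does not decrease its cost,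
so every walk costs at most `|V| · Σ |c|`.
-/

namespace List

variable {α β : Type*}

def IsCyclicChain (R : α → α → Prop) (l : List α) : Prop :=
  ∀ i : Fin l.length, R (l.get i) (l.get ⟨(i + 1) % l.length, Nat.mod_lt _ i.pos⟩)

theorem IsChain.isCyclicChain_cons {R : α → α → Prop} {a : α} {l : List α}
    (h : IsChain R (a :: l)) (hlast : R ((a :: l).getLast (cons_ne_nil a l)) a) :
    IsCyclicChain R (a :: l) := by
  rintro ⟨i, hi⟩
  simp only [get_eq_getElem]
  by_cases hnext : i + 1 < (a :: l).length
  · simp only [Nat.mod_eq_of_lt hnext]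
    exact isChain_iff_getElem.mp h i hnext
  · have hi_last : i + 1 = (a :: l).length := by omega
    simp only [hi_last, Nat.mod_self]
    simpa [getLast_eq_getElem, ← hi_last] using hlast

theorem exists_eq_append_cons_append_cons_of_not_nodup_map {f : α → β} :
    ∀ {l : List α}, ¬ (l.map f).Nodup →
      ∃ l₁ a l₂ b l₃, l = l₁ ++ a :: l₂ ++ b :: l₃ ∧ f a = f b
  | [], h => absurd nodup_nil h
  | x :: l, h => by
    rw [map_cons, nodup_cons, not_and_or, not_not] at h
    rcases h with hx | hl
    · obtain ⟨y, hy, hfy⟩ := mem_map.mp hx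
      obtain ⟨l₂, l₃, rfl⟩ := append_of_mem hy
      exact ⟨[], x, l₂, y, l₃, rfl, hfy.symm⟩
    · obtain ⟨l₁, a, l₂, b, l₃, rfl, hab⟩ := exists_eq_append_cons_append_cons_of_not_nodup_map hl
      exact ⟨x :: l₁, a, l₂, b, l₃, rfl, hab⟩

end List

namespace LabeledDigraph

variable {V R : Type*}

abbrev Composable (e f : V × R × V) : Prop := e.2.2 = f.1

def cost [AddCommMonoid R] (L : List (V × R × V)) : R := (L.map fun e => e.2.1).sum

theorem cost_append_cons_append_cons [AddCommMonoid R] (A C D : List (V × R × V))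
    (c e : V × R × V) :
    cost (A ++ c :: C ++ e :: D) = cost (A ++ e :: D) + cost (c :: C) := by
  simp only [cost, List.map_append, List.map_cons, List.sum_append, List.sum_cons]
  abel

theorem isChain_excise {A C D : List (V × R × V)} {c e : V × R × V}
    (h : (A ++ c :: C ++ e :: D).IsChain Composable) (hce : c.1 = e.1) :
    (A ++ e :: D).IsChain Composable ∧ (c :: C).IsCyclicChain Composable := by
  obtain ⟨hAC, heD, hCe⟩ := List.isChain_append.mp h
  obtain ⟨hA, hcC, hAc⟩ := List.isChain_append.mp hAC
  have hlast : ((c :: C).getLast (List.cons_ne_nil c C)).2.2 = e.1 := by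
    refine hCe _ ?_ e rfl
    simp [List.getLast?_eq_some_getLast]
  refine ⟨hA.append heD fun x hx y hy => ?_, hcC.isCyclicChain_cons (hlast.trans hce.symm)⟩
  cases hy
  exact (hAc x hx c rfl).trans hce

section OrderedLabels

variable [AddCommMonoid R] [PartialOrder R]

def NoPositiveCycle (E : List (V × R × V)) : Prop :=
  ∀ L : List (V × R × V), L ≠ [] → L ⊆ E → L.IsCyclicChain Composable → cost L ≤ 0

variable [IsOrderedAddMonoid R] [Fintype V]

theorem cost_le_card_nsmul_of_isChain {E : List (V × R × V)} (hnocyc : NoPositiveCycle E)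
    {M : R} (hM0 : 0 ≤ M) (hM : ∀ e ∈ E, e.2.1 ≤ M) :
    ∀ L : List (V × R × V), L ⊆ E → L.IsChain Composable → cost L ≤ Fintype.card V • M := by
  intro L
  induction hn : L.length using Nat.strong_induction_on generalizing L with
  | _ n ih =>
    intro hLE hL
    by_cases hnd : (L.map Prod.fst).Nodup
    · have hlen : L.length ≤ Fintype.card V := by simpa using hnd.length_le_card
      calc cost L ≤ (L.map fun e => e.2.1).length • M := by
            refine List.sum_le_card_nsmul _ _ fun x hx => ?_
            obtain ⟨e, he, rfl⟩ := List.mem_map.mp hx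
            exact hM e (hLE he)
        _ = L.length • M := by rw [List.length_map]
        _ ≤ Fintype.card V • M := nsmul_le_nsmul_left hM0 hlen
    · obtain ⟨A, c, C, e, D, rfl, hce⟩ :=
        List.exists_eq_append_cons_append_cons_of_not_nodup_map hnd
      obtain ⟨hAD, hcyc⟩ := isChain_excise hL hce
      have hcycE : c :: C ⊆ E := fun x hx =>
        hLE (by simp only [List.mem_append, List.mem_cons] at hx ⊢; tauto)
      have hADE : A ++ e :: D ⊆ E := fun x hx =>
        hLE (by simp only [List.mem_append, List.mem_cons] at hx ⊢; tauto)
      calc cost (A ++ c :: C ++ e :: D) = cost (A ++ e :: D) + cost (c :: C) :=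
            cost_append_cons_append_cons A C D c e
        _ ≤ cost (A ++ e :: D) :=
            add_le_of_nonpos_right (hnocyc _ (List.cons_ne_nil c C) hcycE hcyc)
        _ ≤ Fintype.card V • M :=
            ih _ (by simp [← hn]) _ rfl hADE hAD

end OrderedLabels

section IntegerLabels

variable (E : List (V × ℤ × V))

def walkCostsTo (v : V) : Set ℤ :=
  {c | ∃ L : List (V × ℤ × V), L ⊆ E ∧ L.IsChain Composable ∧
    (∀ x ∈ L.getLast?, x.2.2 = v) ∧ cost L = c}

theorem zero_mem_walkCostsTo (v : V) : 0 ∈ walkCostsTo E v :=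
  ⟨[], List.nil_subset _, List.isChain_nil, by simp, rfl⟩

theorem add_mem_walkCostsTo {e : V × ℤ × V} (he : e ∈ E) {c : ℤ}
    (hc : c ∈ walkCostsTo E e.1) : c + e.2.1 ∈ walkCostsTo E e.2.2 := by
  obtain ⟨L, hLE, hL, hlast, rfl⟩ := hc
  refine ⟨L ++ [e], List.append_subset.mpr ⟨hLE, List.cons_subset.mpr ⟨he, List.nil_subset _⟩⟩,
    hL.append (List.isChain_singleton e) fun x hx y hy => ?_, by simp, by simp [cost]⟩
  cases hy
  exact hlast x hx

theorem bddAbove_walkCostsTo [Fintype V]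
    (hnocyc : NoPositiveCycle E) (v : V) : BddAbove (walkCostsTo E v) := by
  set M := (E.map fun e => |e.2.1|).sum
  have habs_nonneg : ∀ x ∈ E.map fun e => |e.2.1|, 0 ≤ x := by
    intro x hx
    obtain ⟨e, -, rfl⟩ := List.mem_map.mp hx
    exact abs_nonneg _
  have hM : ∀ e ∈ E, e.2.1 ≤ M := fun e he =>
    (le_abs_self _).trans (List.single_le_sum habs_nonneg _ (List.mem_map_of_mem he))
  refine ⟨Fintype.card V • M, ?_⟩
  rintro _ ⟨L, hLE, hL, -, rfl⟩
  exact cost_le_card_nsmul_of_isChain hnocyc (List.sum_nonneg habs_nonneg) hM L hLE hL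

theorem exists_nonneg_potential [Fintype V]
    (hnocyc : NoPositiveCycle E) :
    ∃ ω : V → ℤ, (∀ v, 0 ≤ ω v) ∧ ∀ e ∈ E, ω e.1 + e.2.1 ≤ ω e.2.2 := by
  have hbdd := bddAbove_walkCostsTo E hnocyc
  refine ⟨fun v => sSup (walkCostsTo E v),
    fun v => le_csSup (hbdd v) (zero_mem_walkCostsTo E v), fun e he => ?_⟩
  have : sSup (walkCostsTo E e.1) ≤ sSup (walkCostsTo E e.2.2) - e.2.1 :=
    csSup_le ⟨0, zero_mem_walkCostsTo E _⟩ fun c hc =>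
      le_sub_right_of_add_le (le_csSup (hbdd _) (add_mem_walkCostsTo E he hc))
  linarith

end IntegerLabels

end LabeledDigraph

open LabeledDigraph in
/-- If a finite directed graph with integer edge labels (edges given as a list
of triples (source, label, target)) has no cycle of strictly positive total
cost, then there is an assignment ω of natural numbers to vertices such that
ω(α) + c ≤ ω(β) for every edge α →^c β. -/
theorem potential_exists {V : Type*} [Fintype V]
    (E : List (V × ℤ × V))
    (hnocyc : ∀ L : List (V × ℤ × V), L ≠ [] → (∀ e ∈ L, e ∈ E) →
      (∀ i : Fin L.length,
        (L.get i).2.2 = (L.get ⟨(i + 1) % L.length, Nat.mod_lt _ i.pos⟩).1) →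
      (L.map (fun e => e.2.1)).sum ≤ 0) :
    ∃ ω : V → ℕ, ∀ e ∈ E, (ω e.1 : ℤ) + e.2.1 ≤ ω e.2.2 := by
  obtain ⟨ω, hω_nonneg, hω⟩ := exists_nonneg_potential E hnocyc
  refine ⟨fun v => (ω v).toNat, fun e he => ?_⟩
  simpa only [Int.toNat_of_nonneg (hω_nonneg _)] using hω e he
end

section
/- If N is a square rational matrix in which every row is either the zero vector, ±e^j (a signed unit vector), or e^j − e^k with j ≠ k, then det(N) ∈ {0, 1, −1}. -/
/-!
Induct on the size. If some row is `±e_j`, Laplace expansion along it gives `det N = ±det N'`,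
where `N'` deletes that row and column `j`; deleting a column keeps every row of one of the
allowed shapes. Otherwise every row is `0` or `e_j - e_k`, so each row sums to zero: the columns
add up to the zero vector and `det N = 0`.
-/

open Function

section
variable {ι κ R : Type*} [DecidableEq ι]

lemma Pi.single_comp_of_injective [DecidableEq κ] [Zero R] {f : κ → ι} (hf : Injective f)
    (i : κ) (c : R) : Pi.single (f i) c ∘ f = Pi.single i c := by
  simpa [Pi.single] using update_comp_eq_of_injective (0 : ι → R) hf i c

lemma Pi.single_comp_eq_single_or_eq_zero [DecidableEq κ] [Zero R] {f : κ → ι}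
    (hf : Injective f) (j : ι) (c : R) :
    (∃ i, f i = j ∧ Pi.single j c ∘ f = Pi.single i c) ∨ Pi.single j c ∘ f = 0 := by
  by_cases hj : j ∈ Set.range f
  · obtain ⟨i, rfl⟩ := hj
    exact Or.inl ⟨i, rfl, Pi.single_comp_of_injective hf i c⟩
  · exact Or.inr <| funext fun x => Pi.single_eq_of_ne (M := fun _ => R) (fun h => hj ⟨x, h⟩) c

def IsAdmissibleRow [Ring R] (v : ι → R) : Prop :=
  v = 0 ∨ (∃ j, v = Pi.single j 1) ∨ (∃ j, v = Pi.single j (-1)) ∨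
    ∃ j k, j ≠ k ∧ v = Pi.single j 1 + Pi.single k (-1)

namespace IsAdmissibleRow

variable [Ring R] {v : ι → R}

lemma comp [DecidableEq κ] (hv : IsAdmissibleRow v) {f : κ → ι} (hf : Injective f) :
    IsAdmissibleRow (v ∘ f) := by
  rcases hv with rfl | ⟨j, rfl⟩ | ⟨j, rfl⟩ | ⟨j, k, hjk, rfl⟩
  · exact Or.inl rfl
  · rcases Pi.single_comp_eq_single_or_eq_zero hf j (1 : R) with ⟨a, -, ha⟩ | h0
    · exact Or.inr (Or.inl ⟨a, ha⟩)
    · exact Or.inl h0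
  · rcases Pi.single_comp_eq_single_or_eq_zero hf j (-1 : R) with ⟨a, -, ha⟩ | h0
    · exact Or.inr (Or.inr (Or.inl ⟨a, ha⟩))
    · exact Or.inl h0
  · rw [Pi.add_comp]
    rcases Pi.single_comp_eq_single_or_eq_zero hf j (1 : R) with ⟨a, rfl, ha⟩ | ha <;>
      rcases Pi.single_comp_eq_single_or_eq_zero hf k (-1 : R) with ⟨b, rfl, hb⟩ | hb <;>
      rw [ha, hb]
    · exact Or.inr (Or.inr (Or.inr ⟨a, b, fun h => hjk (congrArg f h), rfl⟩))
    · exact Or.inr (Or.inl ⟨a, add_zero _⟩)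
    · exact Or.inr (Or.inr (Or.inl ⟨b, zero_add _⟩))
    · exact Or.inl (add_zero 0)

lemma exists_eq_single_or_sum_eq_zero [Fintype ι] (hv : IsAdmissibleRow v) :
    (∃ j c, (c = 1 ∨ c = -1) ∧ v = Pi.single j c) ∨ ∑ k, v k = 0 := by
  rcases hv with rfl | ⟨j, rfl⟩ | ⟨j, rfl⟩ | ⟨j, k, -, rfl⟩
  · exact Or.inr (by simp)
  · exact Or.inl ⟨j, 1, Or.inl rfl, rfl⟩
  · exact Or.inl ⟨j, -1, Or.inr rfl, rfl⟩
  · exact Or.inr (by simp [Finset.sum_add_distrib])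

end IsAdmissibleRow
end

namespace Matrix

variable {n R : Type*} [Fintype n] [DecidableEq n] [CommRing R]

lemma det_eq_zero_of_sum_row_eq_zero [Nonempty n] {A : Matrix n n R}
    (h : ∀ i, ∑ k, A i k = 0) : A.det = 0 := by
  obtain ⟨j⟩ := ‹Nonempty n›
  have hcol := det_updateCol_sum A j fun _ => 1
  simp only [one_smul, h] at hcol
  rw [← hcol]
  exact det_eq_zero_of_column_eq_zero j fun i => by simp

lemma det_succ_row_of_eq_single {m : ℕ} {A : Matrix (Fin (m + 1)) (Fin (m + 1)) R}
    {i j : Fin (m + 1)} {c : R} (h : A i = Pi.single j c) :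
    A.det = (-1) ^ (i + j : ℕ) * c * (A.submatrix i.succAbove j.succAbove).det := by
  rw [det_succ_row A i, Finset.sum_eq_single j]
  · simp [h]
  · intro k _ hk
    simp [h, hk]
  · simp

theorem det_eq_zero_or_one_or_neg_one_of_isAdmissibleRow :
    ∀ {m : ℕ} (A : Matrix (Fin m) (Fin m) R), (∀ i, IsAdmissibleRow (A i)) →
      A.det = 0 ∨ A.det = 1 ∨ A.det = -1
  | 0, A, _ => Or.inr (Or.inl A.det_fin_zero)
  | m + 1, A, hA => by
    by_cases hunit : ∃ i j c, (c = 1 ∨ c = -1) ∧ A i = Pi.single j c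
    · obtain ⟨i, j, c, hc, hi⟩ := hunit
      have hminor := det_eq_zero_or_one_or_neg_one_of_isAdmissibleRow
        (A.submatrix i.succAbove j.succAbove) fun k => (hA _).comp Fin.succAbove_right_injective
      rw [det_succ_row_of_eq_single hi]
      rcases neg_one_pow_eq_or R (i + j : ℕ) with hs | hs <;> rcases hc with rfl | rfl <;>
        rcases hminor with hd | hd | hd <;> simp [hs, hd]
    · refine Or.inl (det_eq_zero_of_sum_row_eq_zero fun i => ?_)
      exact (hA i).exists_eq_single_or_sum_eq_zero.resolve_left
        fun ⟨j, c, hc, hi⟩ => hunit ⟨i, j, c, hc, hi⟩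

end Matrix

/-- If every row of a square rational matrix is 0, ±e^j, or e^j − e^k (j ≠ k),
then its determinant is 0, 1 or −1. -/
theorem det_zero_one_neg_one {n : ℕ} (N : Matrix (Fin n) (Fin n) ℚ)
    (hrow : ∀ i, N i = 0 ∨
      (∃ j, N i = Pi.single j (1 : ℚ)) ∨
      (∃ j, N i = Pi.single j (-1 : ℚ)) ∨
      (∃ j k, j ≠ k ∧ N i = Pi.single j (1 : ℚ) + Pi.single k (-1 : ℚ))) :
    N.det = 0 ∨ N.det = 1 ∨ N.det = -1 :=
  N.det_eq_zero_or_one_or_neg_one_of_isAdmissibleRow hrow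
end

section
/- Let P' = {z ∈ ℤ^n | Mz ≤ v, z ≥ 0} where each row of M has exactly one +1 and one −1 entry and zeros elsewhere. If P' is nonempty, then P' has a unique smallest element z*: z* ∈ P' and z* ≤ z componentwise for all z ∈ P'. -/
/-!
The solution set is closed under componentwise minimum: for a constraint `z a - z b ≤ v i`,
the minimum at `b` is attained by one of the two solutions, and that solution also dominates
the minimum at `a`. Nonnegative integer vectors are partially well-ordered (Dickson's lemma),
so the solution set has a minimal element, and in an inf-closed set a minimal element is least.
-/

open Matrix Set

theorem InfClosed.isLeast_of_minimal {α : Type*} [SemilatticeInf α] {s : Set α}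
    (hs : InfClosed s) {a : α} (ha : Minimal (· ∈ s) a) : IsLeast s a :=
  ⟨ha.prop, fun _ hb => (ha.le_of_le (hs ha.prop hb) inf_le_left).trans inf_le_right⟩

theorem InfClosed.exists_isLeast {α : Type*} [SemilatticeInf α] {s : Set α}
    (hs : InfClosed s) (hpwo : s.IsPWO) (hne : s.Nonempty) : ∃ a, IsLeast s a :=
  let ⟨a, ha⟩ := hpwo.exists_minimal hne
  ⟨a, hs.isLeast_of_minimal ha⟩

theorem infClosed_Ici {α : Type*} [SemilatticeInf α] (a : α) : InfClosed (Ici a) :=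
  fun _ hb _ hc => le_inf hb hc

theorem Set.isPWO_Ici_pi {ι α : Type*} [Finite ι] [LinearOrder α] [LocallyFiniteOrder α]
    (x : ι → α) : (Ici x).IsPWO := by
  rw [← pi_univ_Ici]
  exact IsPWO.pi fun i => (bddBelow_Ici (a := x i)).isWF.isPWO

theorem eq_single_sub_single {n R : Type*} [DecidableEq n] [Ring R] {r : n → R} {a b : n}
    (hab : a ≠ b) (ha : r a = 1) (hb : r b = -1) (h0 : ∀ l, l ≠ a → l ≠ b → r l = 0) :
    r = Pi.single a 1 - Pi.single b 1 := by
  funext l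
  by_cases hla : l = a
  · subst hla
    simp [ha, hab]
  · by_cases hlb : l = b
    · subst hlb
      simp [hb, hla]
    · simp [h0 l hla hlb, hla, hlb]

theorem infClosed_setOf_mulVec_le {m n R : Type*} [Fintype n] [Ring R] [LinearOrder R]
    [IsOrderedRing R] (M : Matrix m n R) (v : m → R)
    (hrow : ∀ i, ∃ a b : n, a ≠ b ∧ M i a = 1 ∧ M i b = -1 ∧
      ∀ l, l ≠ a → l ≠ b → M i l = 0) :
    InfClosed {z | M *ᵥ z ≤ v} := by
  classical
  intro z hz w hw i
  obtain ⟨a, b, hab, ha, hb, h0⟩ := hrow i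
  have hdiff : ∀ y : n → R, (M *ᵥ y) i = y a - y b := fun y => by
    rw [mulVec, eq_single_sub_single hab ha hb h0, sub_dotProduct, single_one_dotProduct,
      single_one_dotProduct]
  have hzi := hz i
  have hwi := hw i
  rw [hdiff] at hzi hwi ⊢
  simp only [Pi.inf_apply]
  rcases le_total (z b) (w b) with hle | hle
  · rw [inf_eq_left.2 hle]
    exact (sub_le_sub_right inf_le_left _).trans hzi
  · rw [inf_eq_right.2 hle]
    exact (sub_le_sub_right inf_le_right _).trans hwi

/-- If the set P' of nonnegative integer solutions of Mz ≤ v (every row of M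
having exactly one +1, one −1 and zeros elsewhere) is nonempty, then it has a
unique smallest element. -/
theorem smallest_integer_solution {K n : ℕ}
    (M : Matrix (Fin K) (Fin n) ℤ) (v : Fin K → ℤ)
    (hrow : ∀ i, ∃ a b : Fin n, a ≠ b ∧ M i a = 1 ∧ M i b = -1 ∧
      ∀ l, l ≠ a → l ≠ b → M i l = 0)
    (hne : ∃ z : Fin n → ℤ, M.mulVec z ≤ v ∧ 0 ≤ z) :
    ∃! zs : Fin n → ℤ, (M.mulVec zs ≤ v ∧ 0 ≤ zs) ∧
      ∀ z : Fin n → ℤ, M.mulVec z ≤ v ∧ 0 ≤ z → zs ≤ z := by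
  let S : Set (Fin n → ℤ) := {z | M *ᵥ z ≤ v} ∩ Ici 0
  have hclosed : InfClosed S := (infClosed_setOf_mulVec_le M v hrow).inter (infClosed_Ici 0)
  have hpwo : S.IsPWO := (isPWO_Ici_pi 0).mono inter_subset_right
  obtain ⟨zs, hzs⟩ := hclosed.exists_isLeast hpwo hne
  exact ⟨zs, hzs, fun y (hy : IsLeast _ y) => hy.unique hzs⟩
end
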